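/- arXiv:0710.1396 — 2 statements merged into one kernel-verified Lean document; each statement's English description precedes it below -/
import Mathlib

section
/- Let n ≥ 2 and set α = (n-1)/n. Let f : ℕ → ℕ → ℝ be such that 0 ≤ f j k ≤ 1 for all j, k, such that for every j the family (f j k)_k is summable with ∑_k f j k = 1, and such that limsup_{j→∞} ∑_k (f j k)^α ≤ 1, where the sums ∑_k (f j k)^α are taken in [0,∞]. Then lim_{j→∞} (sup_k f j k) = 1. -/
open Filter

/-- Combinatorial lemma: if nonnegative numbers `f j k ∈ [0,1]` sum to 1 in `k` for
every `j`, and the limsup over `j` of the sums of their `(n-1)/n`-th powers is at most 1,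
then the largest piece asymptotically carries all of the mass. -/
theorem largest_piece_tendsto_one
    (n : ℕ) (hn : 2 ≤ n)
    (f : ℕ → ℕ → ℝ)
    (hf0 : ∀ j k, 0 ≤ f j k) (hf1 : ∀ j k, f j k ≤ 1)
    (hsum : ∀ j, Summable (f j))
    (htot : ∀ j, (∑' k, f j k) = 1)
    (hlimsup : limsup
        (fun j => ∑' k, ENNReal.ofReal (f j k ^ ((n - 1 : ℝ) / n))) atTop ≤ 1) :
    Tendsto (fun j => ⨆ k, f j k) atTop (nhds 1) := by
  set α : ℝ := (n - 1 : ℝ) / n with hα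
  have hn0 : (0:ℝ) < n := by positivity
  have h2n : (2:ℝ) ≤ n := by exact_mod_cast hn
  have hαpos : 0 < α := by rw [hα]; apply div_pos <;> linarith
  have hαlt : α < 1 := by
    rw [hα, div_lt_one hn0]; linarith
  set β : ℝ := α - 1 with hβ
  have hβneg : β < 0 := by simp [hβ]; linarith
  set M : ℕ → ℝ := fun j => ⨆ k, f j k with hM
  have hbdd : ∀ j, BddAbove (Set.range (f j)) := fun j => ⟨1, by rintro _ ⟨k, rfl⟩; exact hf1 j k⟩
  have hMle : ∀ j, M j ≤ 1 := fun j => ciSup_le (hf1 j)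
  have hMge : ∀ j k, f j k ≤ M j := fun j k => le_ciSup (hbdd j) k
  have hMpos : ∀ j, 0 < M j := by
    intro j
    by_contra h
    push_neg at h
    have : ∀ k, f j k = 0 := fun k => le_antisymm (le_trans (hMge j k) h) (hf0 j k)
    have hz := htot j
    rw [tsum_congr this, tsum_zero] at hz
    norm_num at hz
  -- key pointwise bound
  have key : ∀ j, ENNReal.ofReal (M j ^ β) ≤ ∑' k, ENNReal.ofReal (f j k ^ α) := by
    intro j
    have h1 : ∀ k, f j k * M j ^ β ≤ f j k ^ α := by
      intro k
      rcases eq_or_lt_of_le (hf0 j k) with h | h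
      · simp [← h]
        positivity
      · have hfβ : M j ^ β ≤ f j k ^ β :=
          Real.rpow_le_rpow_of_nonpos h (hMge j k) hβneg.le
        calc f j k * M j ^ β ≤ f j k * f j k ^ β := by
              exact mul_le_mul_of_nonneg_left hfβ (hf0 j k)
          _ = f j k ^ α := by
              have heq : α = 1 + β := by rw [hβ]; ring
              rw [heq, Real.rpow_one_add' (hf0 j k) (by rw [hβ]; intro hc; linarith)]
    calc ENNReal.ofReal (M j ^ β)
        = ∑' k, ENNReal.ofReal (f j k * M j ^ β) := by
          have : ∀ k, ENNReal.ofReal (f j k * M j ^ β)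
              = ENNReal.ofReal (f j k) * ENNReal.ofReal (M j ^ β) := fun k =>
            ENNReal.ofReal_mul (hf0 j k)
          rw [tsum_congr this, ENNReal.tsum_mul_right,
            ← ENNReal.ofReal_tsum_of_nonneg (hf0 j) (hsum j), htot j]
          simp
      _ ≤ ∑' k, ENNReal.ofReal (f j k ^ α) :=
          ENNReal.tsum_le_tsum fun k => ENNReal.ofReal_le_ofReal (h1 k)
  rw [Metric.tendsto_atTop]
  intro ε hε
  set ε' : ℝ := min ε (1/2) with hε'
  have hε'pos : 0 < ε' := lt_min hε (by norm_num)
  have hε'lt : ε' < 1 := lt_of_le_of_lt (min_le_right _ _) (by norm_num)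
  have hbase : 0 < 1 - ε' := by linarith
  have hc : (1:ENNReal) < ENNReal.ofReal ((1 - ε') ^ β) := by
    rw [show (1:ENNReal) = ENNReal.ofReal 1 by simp, ENNReal.ofReal_lt_ofReal_iff (by positivity)]
    exact (Real.one_lt_rpow_iff_of_pos hbase).2 (Or.inr ⟨by linarith, hβneg⟩)
  have hev : ∀ᶠ j in atTop,
      (∑' k, ENNReal.ofReal (f j k ^ α)) < ENNReal.ofReal ((1 - ε') ^ β) :=
    eventually_lt_of_limsup_lt (lt_of_le_of_lt hlimsup hc)
  rw [eventually_atTop] at hev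
  obtain ⟨N, hN⟩ := hev
  refine ⟨N, fun j hj => ?_⟩
  have h2 : ENNReal.ofReal (M j ^ β) < ENNReal.ofReal ((1 - ε') ^ β) :=
    lt_of_le_of_lt (key j) (hN j hj)
  have h3 : M j ^ β < (1 - ε') ^ β :=
    (ENNReal.ofReal_lt_ofReal_iff (by positivity)).1 h2
  have h4 : 1 - ε' < M j := (Real.rpow_lt_rpow_iff_of_neg (hMpos j) hbase hβneg).1 h3
  rw [Real.dist_eq, abs_lt]
  constructor
  · have := min_le_left ε (1/2); linarith [hε'pos, min_le_left ε (1/2)]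
  · linarith [hMle j, hε]
end

section
/- Let m ≥ 1, let R be a fixed m×m real matrix, and let ε > 0. Let U : ℝ → Matrix(m,m,ℝ) be differentiable on the interval (0,ε) and satisfy the Riccati equation U'(r) + U(r)² + R = 0 for all r ∈ (0,ε). Suppose that there exist m×m real matrices A and B such that U(r) = r⁻¹·I + A + r·B + o(r) as r → 0⁺ (i.e., (U(r) - r⁻¹·I - A - r·B)/r → 0 as r → 0⁺, where I is the identity matrix). Then A = 0 and B = -(1/3)·R. -/
open Filter Set Topology Asymptotics

/-! Write `V = U - r⁻¹ • 1`. The Riccati equation becomes the regular identity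
`(r² • (V + (r / 3) • R))' = -r² • V²`, so `G = r² • (V + (r / 3) • R)` tends to `0` at `0⁺`.
Since `V → A` is bounded, `G' = O(r²)`, and the mean value theorem gives `G = O(r³)`, i.e.
`V = O(r)`, forcing `A = 0`. Then `V → 0`, so `G' = o(r²)` and `G = o(r³)`, i.e.
`r⁻¹ • V + R / 3 → 0`; since `r⁻¹ • V → B`, this is `B = -R / 3`. -/

section

variable {E : Type*} [NormedAddCommGroup E] [NormedSpace ℝ E]

theorem isBigOWith_pow_succ_of_hasDerivAt {g h : ℝ → E} {c : ℝ} {n : ℕ}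
    (hg : ∀ᶠ r in 𝓝[>] 0, HasDerivAt g (h r) r) (hg0 : Tendsto g (𝓝[>] 0) (𝓝 0))
    (hh : IsBigOWith c (𝓝[>] 0) h (· ^ n)) :
    IsBigOWith c (𝓝[>] 0) g (· ^ (n + 1)) := by
  rw [isBigOWith_iff] at hh ⊢
  obtain ⟨δ, hδ, hsub⟩ := mem_nhdsGT_iff_exists_Ioo_subset.1 (hg.and hh)
  filter_upwards [Ioo_mem_nhdsGT hδ] with r hr
  have hpow : ∀ k (y : ℝ), 0 < y → ‖y ^ k‖ = y ^ k := fun k y hy => by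
    rw [norm_pow, Real.norm_of_nonneg hy.le]
  have hc : 0 ≤ c := by
    have := (norm_nonneg _).trans (hsub hr).2
    rw [hpow n r hr.1] at this
    exact nonneg_of_mul_nonneg_left this (pow_pos hr.1 n)
  have hmvt : ∀ x ∈ Ioo 0 r, ‖g r - g x‖ ≤ c * r ^ n * (r - x) := by
    intro x hx
    have hIcc : Icc x r ⊆ Ioo 0 δ := fun y hy => ⟨hx.1.trans_le hy.1, hy.2.trans_lt hr.2⟩
    refine norm_image_sub_le_of_norm_deriv_le_segment'
      (fun y hy => (hsub (hIcc hy)).1.hasDerivWithinAt) (fun y hy => ?_) r ⟨hx.2.le, le_rfl⟩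
    have hy' := hIcc (Ico_subset_Icc_self hy)
    calc ‖h y‖ ≤ c * y ^ n := hpow n y hy'.1 ▸ (hsub hy').2
      _ ≤ c * r ^ n := by gcongr; exacts [hy'.1.le, hy.2.le]
  have hlim : Tendsto (fun x => ‖g r - g x‖) (𝓝[>] 0) (𝓝 ‖g r‖) := by
    simpa using (tendsto_const_nhds.sub hg0).norm
  have hlim' : Tendsto (fun x => c * r ^ n * (r - x)) (𝓝[>] 0) (𝓝 (c * r ^ n * (r - 0))) :=
    (tendsto_const_nhds.sub (tendsto_nhdsWithin_of_tendsto_nhds tendsto_id)).const_mul _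
  calc ‖g r‖ ≤ c * r ^ n * (r - 0) :=
        le_of_tendsto_of_tendsto hlim hlim' (mem_of_superset (Ioo_mem_nhdsGT hr.1) hmvt)
    _ = c * ‖r ^ (n + 1)‖ := by rw [hpow _ r hr.1]; ring

theorem isBigO_pow_succ_of_hasDerivAt {g h : ℝ → E} {n : ℕ}
    (hg : ∀ᶠ r in 𝓝[>] 0, HasDerivAt g (h r) r) (hg0 : Tendsto g (𝓝[>] 0) (𝓝 0))
    (hh : h =O[𝓝[>] 0] (· ^ n)) : g =O[𝓝[>] 0] (· ^ (n + 1)) :=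
  have ⟨_, hc⟩ := hh.isBigOWith
  (isBigOWith_pow_succ_of_hasDerivAt hg hg0 hc).isBigO

theorem isLittleO_pow_succ_of_hasDerivAt {g h : ℝ → E} {n : ℕ}
    (hg : ∀ᶠ r in 𝓝[>] 0, HasDerivAt g (h r) r) (hg0 : Tendsto g (𝓝[>] 0) (𝓝 0))
    (hh : h =o[𝓝[>] 0] (· ^ n)) : g =o[𝓝[>] 0] (· ^ (n + 1)) :=
  IsLittleO.of_isBigOWith fun _ hc =>
    isBigOWith_pow_succ_of_hasDerivAt hg hg0 (hh.forall_isBigOWith hc)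

theorem tendsto_zero_of_isLittleO_pow_smul {l : Filter ℝ} (hl : ∀ᶠ r in l, r ≠ 0)
    {f : ℝ → E} {k : ℕ} (h : (fun r => r ^ k • f r) =o[l] (· ^ k)) : Tendsto f l (𝓝 0) := by
  rw [← isLittleO_one_iff ℝ]
  refine ((isBigO_refl (fun r : ℝ => (r ^ k)⁻¹) l).smul_isLittleO h).congr' ?_ ?_
  · filter_upwards [hl] with r hr
    simp [smul_smul, hr]
  · filter_upwards [hl] with r hr
    simp [hr]

theorem tendsto_inv_smul_sub_of_expansion {f : ℝ → E} {a b : E}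
    (h : Tendsto (fun r => r⁻¹ • (f r - a - r • b)) (𝓝[>] 0) (𝓝 0)) :
    Tendsto (fun r => r⁻¹ • (f r - a)) (𝓝[>] 0) (𝓝 b) := by
  refine (zero_add b ▸ h.add_const b).congr' ?_
  filter_upwards [eventually_mem_nhdsWithin] with r hr
  rw [smul_sub _ (f r - a), inv_smul_smul₀ (ne_of_gt hr), sub_add_cancel]

theorem tendsto_of_expansion {f : ℝ → E} {a b : E}
    (h : Tendsto (fun r => r⁻¹ • (f r - a - r • b)) (𝓝[>] 0) (𝓝 0)) :
    Tendsto f (𝓝[>] 0) (𝓝 a) := by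
  have hlim := (tendsto_nhdsWithin_of_tendsto_nhds tendsto_id).smul
    (tendsto_inv_smul_sub_of_expansion h)
  rw [zero_smul] at hlim
  refine tendsto_sub_nhds_zero_iff.1 (hlim.congr' ?_)
  filter_upwards [eventually_mem_nhdsWithin] with r hr
  exact smul_inv_smul₀ (ne_of_gt hr) _

theorem tendsto_add_div_three_smul {V : ℝ → E} {A R : E}
    (hVA : Tendsto V (𝓝[>] 0) (𝓝 A)) :
    Tendsto (fun s => V s + (s / 3) • R) (𝓝[>] 0) (𝓝 A) := by
  have hid : Tendsto (fun s : ℝ => s) (𝓝[>] 0) (𝓝 0) :=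
    tendsto_nhdsWithin_of_tendsto_nhds tendsto_id
  simpa using hVA.add ((hid.div_const 3).smul_const R)

theorem tendsto_sq_smul_add_div_three_smul {V : ℝ → E} {A R : E}
    (hVA : Tendsto V (𝓝[>] 0) (𝓝 A)) :
    Tendsto (fun s => s ^ 2 • (V s + (s / 3) • R)) (𝓝[>] 0) (𝓝 0) := by
  have hid : Tendsto (fun s : ℝ => s) (𝓝[>] 0) (𝓝 0) :=
    tendsto_nhdsWithin_of_tendsto_nhds tendsto_id
  simpa using (hid.pow 2).smul (tendsto_add_div_three_smul hVA)

end

-- The entrywise sup norm: matrix derivatives and limits are then the entrywise ones.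
open scoped Matrix.Norms.Elementwise

theorem hasDerivAt_sq_smul_of_riccati {ι : Type*} [Fintype ι] [DecidableEq ι]
    {U : ℝ → Matrix ι ι ℝ} {U' R : Matrix ι ι ℝ} {r : ℝ} (hr : r ≠ 0)
    (hU : HasDerivAt U U' r) (hric : U' + U r * U r + R = 0) :
    HasDerivAt (fun s => s ^ 2 • (U s - s⁻¹ • 1 + (s / 3) • R))
      (-(r ^ 2 • ((U r - r⁻¹ • 1) * (U r - r⁻¹ • 1)))) r := by
  have hd := (hasDerivAt_pow 2 r).smul ((hU.sub ((hasDerivAt_inv hr).smul_const 1)).add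
    (((hasDerivAt_id r).div_const 3).smul_const R))
  refine hd.congr_deriv ?_
  rw [eq_sub_of_add_eq (eq_neg_of_add_eq_zero_left hric)]
  simp only [Pi.add_apply, Pi.sub_apply, id, sub_mul, mul_sub, smul_mul_assoc, mul_smul_comm,
    one_mul, mul_one]
  match_scalars <;> field_simp <;> ring

section Regularized

variable {ι : Type*} [Fintype ι] {V : ℝ → Matrix ι ι ℝ} {A R : Matrix ι ι ℝ}

theorem eq_zero_of_hasDerivAt_sq_smul
    (hG : ∀ᶠ r in 𝓝[>] 0,
      HasDerivAt (fun s => s ^ 2 • (V s + (s / 3) • R)) (-(r ^ 2 • (V r * V r))) r)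
    (hVA : Tendsto V (𝓝[>] 0) (𝓝 A)) : A = 0 := by
  have hG3 := isBigO_pow_succ_of_hasDerivAt (n := 2) hG
    (tendsto_sq_smul_add_div_three_smul hVA)
    (((isBigO_refl _ _).smul ((hVA.mul hVA).isBigO_one ℝ)).neg_left.congr_right (by simp))
  have hV0 := tendsto_zero_of_isLittleO_pow_smul
    (eventually_mem_nhdsWithin.mono fun _ => ne_of_gt)
    (hG3.trans_isLittleO ((isLittleO_pow_pow (by norm_num)).mono nhdsWithin_le_nhds))
  exact tendsto_nhds_unique (tendsto_add_div_three_smul hVA) hV0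

theorem tendsto_inv_smul_add_of_hasDerivAt_sq_smul
    (hG : ∀ᶠ r in 𝓝[>] 0,
      HasDerivAt (fun s => s ^ 2 • (V s + (s / 3) • R)) (-(r ^ 2 • (V r * V r))) r)
    (hV0 : Tendsto V (𝓝[>] 0) (𝓝 0)) :
    Tendsto (fun r => r⁻¹ • V r + (1 / 3 : ℝ) • R) (𝓝[>] 0) (𝓝 0) := by
  have hVV : Tendsto (fun r => V r * V r) (𝓝[>] 0) (𝓝 0) := by simpa using hV0.mul hV0
  have hG3 := isLittleO_pow_succ_of_hasDerivAt (n := 2) hG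
    (tendsto_sq_smul_add_div_three_smul hV0)
    (((isBigO_refl _ _).smul_isLittleO ((isLittleO_one_iff ℝ).2 hVV)).neg_left.congr_right
      (by simp))
  refine tendsto_zero_of_isLittleO_pow_smul (k := 3)
    (eventually_mem_nhdsWithin.mono fun _ => ne_of_gt) (hG3.congr' ?_ EventuallyEq.rfl)
  filter_upwards [self_mem_nhdsWithin] with r (hr : 0 < r)
  simp only [smul_add, smul_smul]
  match_scalars <;> field_simp [hr.ne']

end Regularized

theorem riccati_shape_operator_expansion_general
    (m : ℕ) (R : Matrix (Fin m) (Fin m) ℝ) (ε : ℝ) (hε : 0 < ε)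
    (U U' : ℝ → Matrix (Fin m) (Fin m) ℝ)
    (hderiv : ∀ r ∈ Ioo (0:ℝ) ε, ∀ i j, HasDerivAt (fun s => U s i j) (U' r i j) r)
    (hriccati : ∀ r ∈ Ioo (0:ℝ) ε, U' r + U r * U r + R = 0)
    (A B : Matrix (Fin m) (Fin m) ℝ)
    (hexp : ∀ i j, Tendsto
      (fun r : ℝ =>
        (U r i j - (r⁻¹ • (1 : Matrix (Fin m) (Fin m) ℝ) + A + r • B) i j) / r)
      (nhdsWithin 0 (Ioi 0)) (nhds 0)) :
    A = 0 ∧ B = -(1 / 3 : ℝ) • R := by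
  set V : ℝ → Matrix (Fin m) (Fin m) ℝ := fun r => U r - r⁻¹ • 1
  have hrem : Tendsto (fun r => r⁻¹ • (V r - A - r • B)) (𝓝[>] 0) (𝓝 0) :=
    tendsto_pi_nhds.2 fun i => tendsto_pi_nhds.2 fun j => by
      simpa [V, div_eq_inv_mul, sub_sub] using hexp i j
  have hG : ∀ᶠ r in 𝓝[>] 0,
      HasDerivAt (fun s => s ^ 2 • (V s + (s / 3) • R)) (-(r ^ 2 • (V r * V r))) r := by
    filter_upwards [Ioo_mem_nhdsGT hε] with r hr
    exact hasDerivAt_sq_smul_of_riccati hr.1.ne'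
      (hasDerivAt_pi.2 fun i => hasDerivAt_pi.2 (hderiv r hr i)) (hriccati r hr)
  obtain rfl : A = 0 := eq_zero_of_hasDerivAt_sq_smul hG (tendsto_of_expansion hrem)
  have hB := tendsto_inv_smul_add_of_hasDerivAt_sq_smul hG (tendsto_of_expansion hrem)
  have hVB := (tendsto_inv_smul_sub_of_expansion hrem).add_const ((1 / 3 : ℝ) • R)
  simp only [sub_zero] at hVB
  exact ⟨rfl, neg_smul (1 / 3 : ℝ) R ▸
    eq_neg_of_add_eq_zero_left (tendsto_nhds_unique hVB hB)⟩

/-- Asymptotic expansion from the Riccati equation: if `U` solves `U' + U² + R = 0` on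
`(0,ε)` (derivatives taken entrywise) and `U(r) = r⁻¹·I + A + r·B + o(r)` as `r → 0⁺`
(entrywise), then `A = 0` and `B = -(1/3)·R`. -/
theorem riccati_shape_operator_expansion
    (m : ℕ) (hm : 1 ≤ m) (R : Matrix (Fin m) (Fin m) ℝ) (ε : ℝ) (hε : 0 < ε)
    (U U' : ℝ → Matrix (Fin m) (Fin m) ℝ)
    (hderiv : ∀ r ∈ Ioo (0:ℝ) ε, ∀ i j, HasDerivAt (fun s => U s i j) (U' r i j) r)
    (hriccati : ∀ r ∈ Ioo (0:ℝ) ε, U' r + U r * U r + R = 0)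
    (A B : Matrix (Fin m) (Fin m) ℝ)
    (hexp : ∀ i j, Tendsto
      (fun r : ℝ =>
        (U r i j - (r⁻¹ • (1 : Matrix (Fin m) (Fin m) ℝ) + A + r • B) i j) / r)
      (nhdsWithin 0 (Ioi 0)) (nhds 0)) :
    A = 0 ∧ B = -(1 / 3 : ℝ) • R :=
  riccati_shape_operator_expansion_general m R ε hε U U' hderiv hriccati A B hexp
end
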